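/- arXiv:2603.29442 — 4 statements merged into one kernel-verified Lean document; each statement's English description precedes it below -/
import Mathlib

section
/- For all constants a > 0 and c > 0 there exists ζ₀ > 0 with the following property. Let ζ ∈ (0, ζ₀], set K = ζ^{−a/2}/4, define q_K(n) = ((K+1)/K)·((K+n)/(K+n+1))·2^{−n} for integers n ≥ 0, and define p̄_n = 1/3 + ζ^a·e^{−c·n}. Then q_K is a supersolution for the operator 𝓛_{p̄}: for every integer n ≥ 1, p̄_n·q_K(n−1) + (1 − p̄_n)·q_K(n+1) − q_K(n) ≤ 0. -/
/-- `q_K(n) = ((K+1)/K)·((K+n)/(K+n+1))·2^{-n}` for integers `n ≥ 0`. -/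
noncomputable def qK (K : ℝ) (n : ℕ) : ℝ :=
  ((K + 1) / K) * ((K + n) / (K + n + 1)) * (2 : ℝ) ^ (-(n : ℝ))

/-- `t² ≤ eᵗ` for `t ≥ 0`. -/
theorem sq_le_exp' (t : ℝ) (ht : 0 ≤ t) : t^2 ≤ Real.exp t := by
  have h4 : Real.exp t = (Real.exp (t/4))^4 := by
    rw [← Real.exp_nat_mul]; ring_nf
  have h1 : t/4 + 1 ≤ Real.exp (t/4) := Real.add_one_le_exp (t/4)
  have h0 : (0:ℝ) ≤ t/4 + 1 := by linarith
  nlinarith [sq_nonneg (1 - t/4), sq_nonneg (1 + t/4), pow_le_pow_left₀ h0 h1 4]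

/-- The key rational inequality. -/
theorem keyineq (x ε : ℝ) (hx : 1 < x) (hε : 0 ≤ ε) (hbd : 6*ε*(x+2)^2 ≤ 1) :
    (1/3+ε)*((x-1)/x)*2 + (1-(1/3+ε))*((x+1)/(x+2))*(1/2) - x/(x+1) ≤ 0 := by
  have hx0 : (0:ℝ) < x := by linarith
  have hx1 : (0:ℝ) < x+1 := by linarith
  have hx2 : (0:ℝ) < x+2 := by linarith
  have heq : (1/3+ε)*((x-1)/x)*2 + (1-(1/3+ε))*((x+1)/(x+2))*(1/2) - x/(x+1)
      = (-((x+4)/3) + ε*(2*(x^2-1)*(x+2) - x*(x+1)^2/2)) / (x*(x+1)*(x+2)) := by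
    field_simp; ring
  rw [heq]
  apply div_nonpos_of_nonpos_of_nonneg _ (by positivity)
  nlinarith [mul_le_mul_of_nonneg_right hbd (show (0:ℝ) ≤ x^2-1 by nlinarith),
    mul_nonneg hε hx0.le, mul_nonneg (mul_nonneg hε hx1.le) hx1.le,
    mul_nonneg (mul_nonneg (mul_nonneg hε hx0.le) hx1.le) hx1.le]

/-- The supersolution property for abstract `ε`. -/
theorem core (K : ℝ) (hK : 0 < K) (m : ℕ) (ε : ℝ) (hε : 0 ≤ ε)
    (hbd : 6*ε*(K+(m:ℝ)+3)^2 ≤ 1) :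
    (1/3+ε) * qK K m + (1-(1/3+ε)) * qK K (m+2) - qK K (m+1) ≤ 0 := by
  set x : ℝ := K + m + 1 with hxdef
  have hx : 1 < x := by
    have : (0:ℝ) ≤ (m:ℝ) := Nat.cast_nonneg m
    simp only [hxdef]; linarith
  set T : ℝ := (2:ℝ) ^ (-((m:ℝ)+1)) with hT
  have hT0 : 0 < T := Real.rpow_pos_of_pos two_pos _
  have h2m : (2:ℝ) ^ (-(m:ℝ)) = T * 2 := by
    have e : -(m:ℝ) = (-((m:ℝ)+1)) + 1 := by ring
    rw [e, Real.rpow_add two_pos, Real.rpow_one, hT]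
  have h2m2 : (2:ℝ) ^ (-((m:ℝ)+2)) = T * (1/2) := by
    have e : -((m:ℝ)+2) = (-((m:ℝ)+1)) + (-1) := by ring
    rw [e, Real.rpow_add two_pos, Real.rpow_neg_one, hT]
    norm_num
  have heq : (1/3+ε) * qK K m + (1-(1/3+ε)) * qK K (m+2) - qK K (m+1)
      = ((K+1)/K) * T * ((1/3+ε)*((x-1)/x)*2 + (1-(1/3+ε))*((x+1)/(x+2))*(1/2) - x/(x+1)) := by
    simp only [qK, Nat.cast_add, Nat.cast_ofNat, Nat.cast_one]
    rw [h2m, h2m2, hxdef]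
    ring
  rw [heq]
  have := keyineq x ε hx hε (by rw [hxdef]; convert hbd using 3; ring)
  exact mul_nonpos_of_nonneg_of_nonpos (by positivity) this

/-- The bound on the perturbation. -/
theorem epsbound (c K N : ℝ) (hc : 0 < c) (hK : 0 < K) (hKc : 6/c ≤ K) (hN : 1 ≤ N) :
    6 * (1/(16*K^2) * Real.exp (-(c*N))) * (K+N+2)^2 ≤ 1 := by
  have hE0 : (0:ℝ) < Real.exp (-(c*N)) := Real.exp_pos _
  have hE1 : Real.exp (-(c*N)) ≤ 1 := by
    rw [Real.exp_le_one_iff]; nlinarith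
  have hsq : (c*N)^2 ≤ Real.exp (c*N) := sq_le_exp' _ (by positivity)
  have hNE : N^2 * Real.exp (-(c*N)) ≤ 1/c^2 := by
    rw [Real.exp_neg, ← div_eq_mul_inv, div_le_div_iff₀ (Real.exp_pos _) (by positivity)]
    nlinarith [hsq]
  have hA : (K+N+2)^2 ≤ 2*K^2 + 18*N^2 := by nlinarith [sq_nonneg (K - (N+2))]
  have hK2 : 36*(1/c^2) ≤ K^2 := by
    have h := pow_le_pow_left₀ (by positivity) hKc 2
    have e : (6/c)^2 = 36*(1/c^2) := by ring
    rw [e] at h; linarith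
  have step1 : Real.exp (-(c*N)) * (K+N+2)^2 ≤ 2*K^2*Real.exp (-(c*N)) + 18*(N^2*Real.exp (-(c*N))) := by
    nlinarith [mul_le_mul_of_nonneg_left hA hE0.le]
  have step2 : 2*K^2*Real.exp (-(c*N)) ≤ 2*K^2 := by nlinarith [sq_nonneg K]
  have main : Real.exp (-(c*N)) * (K+N+2)^2 ≤ 2*K^2 + 18*(1/c^2) := by linarith
  have hgoal : 6 * (1/(16*K^2) * Real.exp (-(c*N))) * (K+N+2)^2
      = (6 * (Real.exp (-(c*N)) * (K+N+2)^2)) / (16*K^2) := by ring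
  rw [hgoal, div_le_one (by positivity)]
  nlinarith [main, hK2, sq_nonneg K]

/-- For all `a > 0`, `c > 0` there exists `ζ₀ > 0` such that for `ζ ∈ (0, ζ₀]`,
with `K = ζ^{-a/2}/4` and `p̄_n = 1/3 + ζ^a e^{-cn}`, the function `q_K` is a
supersolution for `𝓛_{p̄}`: `p̄_n q_K(n-1) + (1-p̄_n) q_K(n+1) - q_K(n) ≤ 0` for all `n ≥ 1`. -/
theorem stmt0 (a c : ℝ) (ha : 0 < a) (hc : 0 < c) :
    ∃ ζ₀ : ℝ, 0 < ζ₀ ∧ ∀ ζ : ℝ, 0 < ζ → ζ ≤ ζ₀ → ∀ n : ℕ, 1 ≤ n →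
      (1 / 3 + ζ ^ a * Real.exp (-c * n)) * qK (ζ ^ (-(a / 2)) / 4) (n - 1)
        + (1 - (1 / 3 + ζ ^ a * Real.exp (-c * n))) * qK (ζ ^ (-(a / 2)) / 4) (n + 1)
        - qK (ζ ^ (-(a / 2)) / 4) n ≤ 0 := by
  set m₀ : ℝ := min (c/24) 1 with hm₀
  have hm₀0 : 0 < m₀ := lt_min (by positivity) one_pos
  refine ⟨m₀ ^ (2/a), Real.rpow_pos_of_pos hm₀0 _, ?_⟩
  intro ζ hζ hζle n hn
  set K : ℝ := ζ ^ (-(a/2)) / 4 with hKdef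
  have hu0 : 0 < ζ ^ (-(a/2)) := Real.rpow_pos_of_pos hζ _
  have hK0 : 0 < K := by rw [hKdef]; positivity
  -- `K ≥ 6/c`
  have hζ0exp : (m₀ ^ (2/a)) ^ (-(a/2)) = m₀⁻¹ := by
    rw [← Real.rpow_mul hm₀0.le,
      show (2/a) * (-(a/2)) = (-1:ℝ) by field_simp, Real.rpow_neg_one]
  have hmono : (m₀ ^ (2/a)) ^ (-(a/2)) ≤ ζ ^ (-(a/2)) := by
    apply Real.rpow_le_rpow_of_nonpos hζ hζle
    nlinarith [ha]
  have hKc : 6/c ≤ K := by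
    have hmle : m₀ ≤ c/24 := min_le_left _ _
    have h1 : (24:ℝ)/c ≤ m₀⁻¹ := by
      rw [div_le_iff₀ hc]
      have h2 := mul_le_mul_of_nonneg_left hmle (inv_pos.2 hm₀0).le
      rw [inv_mul_cancel₀ (ne_of_gt hm₀0)] at h2
      nlinarith
    have h3 : m₀⁻¹ ≤ ζ ^ (-(a/2)) := by rw [← hζ0exp]; exact hmono
    rw [div_le_iff₀ hc] at h1
    have h4 := mul_le_mul_of_nonneg_right h3 hc.le
    rw [hKdef, div_le_div_iff₀ hc (by norm_num : (0:ℝ) < 4)]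
    linarith
  -- `ζ^a = 1/(16 K²)`
  have hza : ζ ^ a = 1/(16*K^2) := by
    have e1 : a = (-(a/2)) * (-2:ℝ) := by ring
    rw [show ζ ^ a = ζ ^ ((-(a/2)) * (-2:ℝ)) by rw [← e1],
      Real.rpow_mul hζ.le]
    rw [show ζ ^ (-(a/2)) = 4*K by rw [hKdef]; ring]
    rw [show (-2:ℝ) = -((2:ℕ):ℝ) by norm_num, Real.rpow_neg (by positivity),
      Real.rpow_natCast]
    field_simp
    ring
  -- the perturbation bound
  set ε : ℝ := ζ ^ a * Real.exp (-c * n) with hε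
  have hexp0 : 0 < Real.exp (-c * n) := Real.exp_pos _
  have hε0 : 0 ≤ ε := by positivity
  obtain ⟨m, rfl⟩ : ∃ m, n = m + 1 := ⟨n - 1, (Nat.succ_pred_eq_of_pos hn).symm⟩
  have hbd : 6*ε*(K+(m:ℝ)+3)^2 ≤ 1 := by
    have hN1 : (1:ℝ) ≤ (m:ℝ)+1 := by
      have : (0:ℝ) ≤ (m:ℝ) := Nat.cast_nonneg m
      linarith
    have h := epsbound c K ((m:ℝ)+1) hc hK0 hKc hN1
    have earg : -c*(((m+1:ℕ)):ℝ) = -(c*((m:ℝ)+1)) := by push_cast; ring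
    rw [hε, hza, earg]
    calc 6*(1/(16*K^2) * Real.exp (-(c*((m:ℝ)+1))))*(K+(m:ℝ)+3)^2
        = 6*(1/(16*K^2) * Real.exp (-(c*((m:ℝ)+1))))*(K+((m:ℝ)+1)+2)^2 := by ring_nf
      _ ≤ 1 := h
  have := core K hK0 m ε hε0 hbd
  simpa using this
end

section
/- For all constants a > 0 and c > 0 there exists ζ₀ > 0 such that for every ζ ∈ (0, ζ₀], every integer N ≥ 2, and every g : {0,1,…,N} → ℝ satisfying g(0) ≤ 1, g(N) ≤ 0 and p̄_n·g(n−1) + (1 − p̄_n)·g(n+1) − g(n) ≥ 0 for all integers 0 < n < N, where p̄_n = 1/3 + ζ^a·e^{−c·n}, one has g(1) ≤ 1/2 + 8·ζ^a. -/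
/-- Discrete maximum principle: a subsolution nonpositive at both endpoints is
nonpositive at 1. -/
lemma stmt2_maxpr (N : ℕ) (hN : 1 ≤ N) (u : ℕ → ℝ) (p : ℕ → ℝ)
    (hp : ∀ n : ℕ, 0 < n → n < N → 0 < p n ∧ p n < 1)
    (h : ∀ n : ℕ, 0 < n → n < N → 0 ≤ p n * u (n - 1) + (1 - p n) * u (n + 1) - u n)
    (h0 : u 0 ≤ 0) (hNle : u N ≤ 0) : u 1 ≤ 0 := by
  by_contra hu1
  push_neg at hu1
  have key : ∀ n : ℕ, 1 ≤ n → n ≤ N → 0 < u n - u (n - 1) ∧ u 1 ≤ u n := by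
    intro n hn
    induction n, hn using Nat.le_induction with
    | base =>
      intro _
      exact ⟨by simpa using by linarith, le_refl _⟩
    | succ n hn ih =>
      intro hle
      have hnN : n < N := Nat.lt_of_lt_of_le (Nat.lt_succ_self n) hle
      obtain ⟨hd, hm⟩ := ih hnN.le
      have hpn := hp n hn hnN
      have hs := h n hn hnN
      have hgrow : 0 < u (n + 1) - u n := by
        nlinarith [mul_pos hpn.1 hd, hpn.2, hs]
      exact ⟨by simpa using hgrow, by linarith⟩
  have hfin := key N hN le_rfl
  linarith [hfin.2]

set_option maxHeartbeats 1000000 in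
/-- For all `a > 0`, `c > 0` there exists `ζ₀ > 0` such that for every `ζ ∈ (0, ζ₀]`,
every integer `N ≥ 2` and every `g : {0,…,N} → ℝ` with `g(0) ≤ 1`, `g(N) ≤ 0` which is a
subsolution for `𝓛_{p̄}` with `p̄_n = 1/3 + ζ^a e^{-cn}`, i.e.
`p̄_n g(n-1) + (1-p̄_n) g(n+1) - g(n) ≥ 0` for `0 < n < N`, one has
`g(1) ≤ 1/2 + 8 ζ^a`. -/
theorem stmt2 (a c : ℝ) (ha : 0 < a) (hc : 0 < c) :
    ∃ ζ₀ : ℝ, 0 < ζ₀ ∧ ∀ ζ : ℝ, 0 < ζ → ζ ≤ ζ₀ → ∀ N : ℕ, 2 ≤ N → ∀ g : ℕ → ℝ,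
      g 0 ≤ 1 → g N ≤ 0 →
      (∀ n : ℕ, 0 < n → n < N →
        0 ≤ (1 / 3 + ζ ^ a * Real.exp (-c * n)) * g (n - 1)
          + (1 - (1 / 3 + ζ ^ a * Real.exp (-c * n))) * g (n + 1) - g n) →
      g 1 ≤ 1 / 2 + 8 * ζ ^ a := by
  set m0 : ℝ := min (c / 18) (1 / 2) with hm0
  have hm0pos : 0 < m0 := lt_min (by positivity) (by norm_num)
  refine ⟨m0 ^ (1 / a), Real.rpow_pos_of_pos hm0pos _, ?_⟩
  intro ζ hζ hζle N hN g hg0 hgN hsub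
  set ε : ℝ := ζ ^ a with hεdef
  have hεpos : 0 < ε := Real.rpow_pos_of_pos hζ a
  have hεm : ε ≤ m0 := by
    have h1 : ζ ^ a ≤ (m0 ^ (1 / a)) ^ a := Real.rpow_le_rpow hζ.le hζle ha.le
    rwa [← Real.rpow_mul hm0pos.le, one_div_mul_cancel ha.ne',
      Real.rpow_one] at h1
  have hεc : ε ≤ c / 18 := hεm.trans (min_le_left _ _)
  have hεhalf : ε ≤ 1 / 2 := hεm.trans (min_le_right _ _)
  -- the supersolution
  set φ : ℕ → ℝ := fun n => (1 + 6 * ε * n) * (1 / 2 : ℝ) ^ n with hφdef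
  have hexp_pos : ∀ n : ℕ, 0 < Real.exp (-c * n) := fun n => Real.exp_pos _
  have hexp_le : ∀ n : ℕ, Real.exp (-c * n) ≤ 1 := by
    intro n
    have h1 : (0 : ℝ) ≤ c * n := by positivity
    have h2 : Real.exp (-c * n) ≤ Real.exp 0 := Real.exp_le_exp.mpr (by linarith)
    simpa [Real.exp_zero] using h2
  have hsuper : ∀ n : ℕ, 0 < n →
      (1 / 3 + ε * Real.exp (-c * n)) * φ (n - 1)
        + (1 - (1 / 3 + ε * Real.exp (-c * n))) * φ (n + 1) - φ n ≤ 0 := by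
    intro n hn
    obtain ⟨m, rfl⟩ : ∃ m, n = m + 1 := ⟨n - 1, (Nat.succ_pred_eq_of_pos hn).symm⟩
    simp only [hφdef, Nat.add_sub_cancel]
    set E : ℝ := Real.exp (-c * ((m + 1 : ℕ) : ℝ)) with hE
    have hE_pos : 0 < E := hexp_pos (m + 1)
    have hE_le : E ≤ 1 := hexp_le (m + 1)
    set t : ℝ := (1 / 2 : ℝ) ^ m with ht
    have ht_pos : 0 < t := by positivity
    set δ : ℝ := ε * E with hδ
    have hδ_pos : 0 < δ := mul_pos hεpos hE_pos
    have hδ_le : δ ≤ ε := by nlinarith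
    -- key bound : c * (m * E) ≤ 1
    have hkey : c * ((m : ℝ) * E) ≤ 1 := by
      have h1 : c * ((m : ℝ) + 1) + 1 ≤ Real.exp (c * ((m : ℝ) + 1)) := Real.add_one_le_exp _
      have hEmul : E * Real.exp (c * ((m : ℝ) + 1)) = 1 := by
        rw [hE, ← Real.exp_add,
          show -c * ((m + 1 : ℕ) : ℝ) + c * ((m : ℝ) + 1) = 0 by push_cast; ring,
          Real.exp_zero]
      nlinarith [hE_pos, h1, hc, (Nat.cast_nonneg m : (0:ℝ) ≤ (m:ℝ)),
        mul_le_mul_of_nonneg_left h1 hE_pos.le,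
        mul_pos hE_pos hc]
    have hδm : δ * (m : ℝ) ≤ ε / c := by
      have h4 : (m : ℝ) * E ≤ 1 / c := by
        rw [le_div_iff₀ hc]; nlinarith [hkey]
      calc δ * (m : ℝ) = ε * ((m : ℝ) * E) := by rw [hδ]; ring
        _ ≤ ε * (1 / c) := mul_le_mul_of_nonneg_left h4 hεpos.le
        _ = ε / c := by ring
    have h18 : ε / c ≤ 1 / 18 := by
      rw [div_le_div_iff₀ hc (by norm_num)]
      linarith
    have hεδm : ε * (δ * (m : ℝ)) ≤ ε / 18 := by
      have h5 : δ * (m : ℝ) ≤ 1 / 18 := hδm.trans h18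
      have h6 : ε * (δ * (m : ℝ)) ≤ ε * (1 / 18) :=
        mul_le_mul_of_nonneg_left h5 hεpos.le
      linarith
    have hεδ : 0 ≤ ε * δ := by positivity
    -- the scalar inequality
    have hP : -ε + (3 / 4) * δ + (3 * ε / 2) * δ * (3 * (m : ℝ) - 2) ≤ 0 := by
      nlinarith [hεδm, hεδ, hδ_le, hεpos.le]
    have hmain : t * (-ε + (3 / 4) * δ + (3 * ε / 2) * δ * (3 * (m : ℝ) - 2)) ≤ 0 :=
      mul_nonpos_of_nonneg_of_nonpos ht_pos.le hP
    rw [show ((1:ℝ)/2) ^ (m + 1) = t * (1/2) by rw [ht]; ring,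
        show ((1:ℝ)/2) ^ (m + 1 + 1) = t * (1/4) by rw [ht]; ring]
    push_cast
    nlinarith [hmain]
  -- apply the maximum principle to u = g - φ
  have hp' : ∀ n : ℕ, 0 < n → n < N →
      0 < (1 / 3 + ε * Real.exp (-c * n)) ∧ (1 / 3 + ε * Real.exp (-c * n)) < 1 := by
    intro n _ _
    have h1 := hexp_le n
    have h2 := hexp_pos n
    constructor
    · nlinarith [mul_pos hεpos h2]
    · nlinarith [mul_le_of_le_one_right hεpos.le h1]
  have hcomb : ∀ n : ℕ, 0 < n → n < N →
      0 ≤ (1 / 3 + ε * Real.exp (-c * n)) * (g (n - 1) - φ (n - 1))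
        + (1 - (1 / 3 + ε * Real.exp (-c * n))) * (g (n + 1) - φ (n + 1))
        - (g n - φ n) := by
    intro n hn hnN
    have h1 := hsub n hn hnN
    have h2 := hsuper n hn
    nlinarith [h1, h2]
  have hφ0 : φ 0 = 1 := by simp [hφdef]
  have hφN : 0 ≤ φ N := by
    simp only [hφdef]
    positivity
  have h0' : g 0 - φ 0 ≤ 0 := by rw [hφ0]; linarith
  have hN' : g N - φ N ≤ 0 := by linarith
  have hu1 : g 1 - φ 1 ≤ 0 :=
    stmt2_maxpr N (by omega) (fun k => g k - φ k) (fun n => 1 / 3 + ε * Real.exp (-c * n))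
      hp' hcomb h0' hN'
  have hφ1 : φ 1 = 1 / 2 + 3 * ε := by
    simp only [hφdef]
    norm_num
    ring
  rw [hφ1] at hu1
  linarith
end

section
/- Let d ≥ 1, let q ∈ ℓ¹(ℤ^d) with q ≥ 0, let h be the half-space indicator, and set ψ(j) = h(j) + |𝓛h(j)| (the defining series of 𝓛h converges absolutely since h is bounded). Then lim_{i→∞} sup_{j∈ℤ^d : j₁ ≤ −i} ψ(j) = 0 and lim_{i→∞} sup_{j∈ℤ^d : j₁ ≤ −i} |𝓛ψ(j)| = 0. -/
open Filter


/-- Let `d ≥ 1`, `q ∈ ℓ¹(ℤ^d)` with `q ≥ 0`, let `h` be the half-space indicator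
(`h(j) = 1` if `j₁ ≥ 0`, else `0`) and set `ψ(j) = h(j) + |𝓛h(j)|`, where
`𝓛g(j) = Σ_k q(j-k)(g(k) - g(j))` (the defining series of `𝓛h` converges
absolutely since `h` is bounded).  Then
`lim_{i→∞} sup_{j : j₁ ≤ -i} ψ(j) = 0` and `lim_{i→∞} sup_{j : j₁ ≤ -i} |𝓛ψ(j)| = 0`. -/
theorem stmt10 (d : ℕ) (hd : 0 < d) (q : (Fin d → ℤ) → ℝ)
    (hq : Summable fun i => |q i|) (hq0 : ∀ i, 0 ≤ q i)
    (h ψ : (Fin d → ℤ) → ℝ)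
    (hh : ∀ j, h j = if 0 ≤ j ⟨0, hd⟩ then (1 : ℝ) else 0)
    (hψ : ∀ j, ψ j = h j + |∑' k, q (j - k) * (h k - h j)|) :
    (∀ j, Summable fun k => |q (j - k) * (h k - h j)|) ∧
    Filter.Tendsto
      (fun i : ℤ => ⨆ j : {j : Fin d → ℤ // j ⟨0, hd⟩ ≤ -i}, ψ (j : Fin d → ℤ))
      Filter.atTop (nhds 0) ∧
    Filter.Tendsto
      (fun i : ℤ => ⨆ j : {j : Fin d → ℤ // j ⟨0, hd⟩ ≤ -i},
        |∑' k, q ((j : Fin d → ℤ) - k) * (ψ k - ψ (j : Fin d → ℤ))|)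
      Filter.atTop (nhds 0) := by
  classical
  have hq' : Summable q := by
    have e : (fun i => |q i|) = q := funext fun i => abs_of_nonneg (hq0 i)
    rwa [e] at hq
  set c : (Fin d → ℤ) → ℤ := fun j => j ⟨0, hd⟩ with hc
  have hcsub : ∀ j k : Fin d → ℤ, c (j - k) = c j - c k := fun j k => rfl
  set Q : ℝ := ∑' m, q m with hQ
  have hQ0 : 0 ≤ Q := tsum_nonneg hq0
  -- summability of translated kernel
  have hsub : ∀ j, Summable fun k => q (j - k) := by
    intro j
    have := (Equiv.subLeft j).summable_iff (f := q)
    exact this.2 hq'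
  have hsub_tsum : ∀ j, (∑' k, q (j - k)) = Q := fun j => (Equiv.subLeft j).tsum_eq q
  -- h bounds
  have hh0 : ∀ j, 0 ≤ h j := by intro j; rw [hh j]; split <;> norm_num
  have hh1 : ∀ j, h j ≤ 1 := by intro j; rw [hh j]; split <;> norm_num
  have hhneg : ∀ j, c j < 0 → h j = 0 := by
    intro j hj
    have hj' : j ⟨0, hd⟩ < 0 := hj
    rw [hh j, if_neg (by omega)]
  -- Part 1
  have part1 : ∀ j, Summable fun k => |q (j - k) * (h k - h j)| := by
    intro j
    refine Summable.of_nonneg_of_le (fun k => abs_nonneg _) (fun k => ?_) (hsub j)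
    rw [abs_mul, abs_of_nonneg (hq0 _)]
    have : |h k - h j| ≤ 1 := by
      rw [abs_sub_le_iff]
      constructor <;> nlinarith [hh0 j, hh1 j, hh0 k, hh1 k]
    nlinarith [hq0 (j - k)]
  have part1' : ∀ j, Summable fun k => q (j - k) * (h k - h j) := fun j => (part1 j).of_abs
  -- ψ bounds
  set C : ℝ := 1 + Q with hC
  have habs_tsum : ∀ f : (Fin d → ℤ) → ℝ, Summable (fun k => |f k|) →
      |∑' k, f k| ≤ ∑' k, |f k| := by
    intro f hf
    simpa [Real.norm_eq_abs] using norm_tsum_le_tsum_norm (f := f) (by simpa [Real.norm_eq_abs] using hf)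
  have hψ0 : ∀ j, 0 ≤ ψ j := fun j => by rw [hψ j]; exact add_nonneg (hh0 j) (abs_nonneg _)
  have hψC : ∀ j, ψ j ≤ C := by
    intro j
    rw [hψ j, hC]
    gcongr
    · exact hh1 j
    calc |∑' k, q (j - k) * (h k - h j)| ≤ ∑' k, |q (j - k) * (h k - h j)| :=
          habs_tsum _ (part1 j)
      _ ≤ ∑' k, q (j - k) := by
          refine Summable.tsum_le_tsum (fun k => ?_) (part1 j) (hsub j)
          rw [abs_mul, abs_of_nonneg (hq0 _)]
          have h1 : |h k - h j| ≤ 1 := by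
            rw [abs_sub_le_iff]
            constructor <;> nlinarith [hh0 j, hh1 j, hh0 k, hh1 k]
          nlinarith [hq0 (j - k)]
      _ = Q := hsub_tsum j
  have hC0 : 0 ≤ C := le_trans (hψ0 (fun _ => 0)) (hψC _)
  -- tail function
  set T : ℤ → ℝ := fun i => ∑' m : {m : Fin d → ℤ // m ⟨0, hd⟩ ≤ -i}, q m with hT
  have hTsummable : ∀ i : ℤ, Summable fun m : {m : Fin d → ℤ // m ⟨0, hd⟩ ≤ -i} => q m :=
    fun i => hq'.subtype _
  have hT0 : ∀ i, 0 ≤ T i := fun i => tsum_nonneg fun m => hq0 _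
  -- tail tends to zero
  have hTtend : Tendsto T atTop (nhds 0) := by
    rw [Metric.tendsto_atTop]
    intro ε hε
    have := (tendsto_tsum_compl_atTop_zero q).eventually (Metric.ball_mem_nhds 0 hε)
    rw [Filter.eventually_atTop] at this
    obtain ⟨F, hF⟩ := this
    obtain ⟨M, hM⟩ := Finset.exists_le (F.image fun m => -(m ⟨0, hd⟩))
    refine ⟨M + 1, fun i hi => ?_⟩
    have hFi := hF F le_rfl
    simp only [Metric.mem_ball, dist_zero_right, Real.norm_eq_abs] at hFi
    have hle : T i ≤ ∑' m : {m // m ∉ F}, q m := by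
      refine Summable.tsum_le_tsum_of_inj
        (fun m => ⟨m.1, fun hmem => ?_⟩) ?_ (fun m _ => hq0 _) (fun m => le_rfl)
        (hTsummable i) (hq'.subtype _)
      · have h1 : -(m.1 ⟨0, hd⟩) ≤ M := hM _ (Finset.mem_image_of_mem _ hmem)
        have h2 : m.1 ⟨0, hd⟩ ≤ -i := m.2
        omega
      · intro a b hab
        simpa [Subtype.ext_iff] using hab
    have habs : |T i| = T i := abs_of_nonneg (hT0 i)
    have h2 : (0:ℝ) ≤ ∑' m : {m // m ∉ F}, q m := tsum_nonneg fun m => hq0 _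
    calc dist (T i) 0 = T i := by rw [Real.dist_eq, sub_zero, habs]
      _ ≤ ∑' m : {m // m ∉ F}, q m := hle
      _ ≤ |∑' m : {m // m ∉ F}, q m| := le_abs_self _
      _ < ε := hFi
  -- nonempty and bddAbove for sups
  have hne : ∀ i : ℤ, Nonempty {j : Fin d → ℤ // j ⟨0, hd⟩ ≤ -i} :=
    fun i => ⟨⟨fun _ => -i, le_rfl⟩⟩
  set U : ℤ → ℝ := fun i => ⨆ j : {j : Fin d → ℤ // j ⟨0, hd⟩ ≤ -i}, ψ (j : Fin d → ℤ) with hU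
  have hUbdd : ∀ i : ℤ, BddAbove (Set.range fun j : {j : Fin d → ℤ // j ⟨0, hd⟩ ≤ -i} =>
      ψ (j : Fin d → ℤ)) := by
    intro i
    refine ⟨C, ?_⟩
    rintro x ⟨j, rfl⟩
    exact hψC _
  have hU0 : ∀ i, 0 ≤ U i := by
    intro i
    haveI := hne i
    have := le_ciSup (hUbdd i) (Classical.arbitrary _)
    exact le_trans (hψ0 _) this
  -- ψ tail bound: for c j ≤ -i, i ≥ 1, ψ j ≤ T i
  have hψtail : ∀ i : ℤ, 1 ≤ i → ∀ j : Fin d → ℤ, c j ≤ -i → ψ j ≤ T i := by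
    intro i hi j hj
    have hjneg : h j = 0 := hhneg j (by omega)
    have heq : ∀ k, q (j - k) * (h k - h j) = Set.indicator {k : Fin d → ℤ | 0 ≤ c k}
        (fun k => q (j - k)) k := by
      intro k
      by_cases hk : k ∈ {k : Fin d → ℤ | 0 ≤ c k}
      · rw [Set.indicator_of_mem hk, hjneg, hh k,
          if_pos (show (0:ℤ) ≤ k ⟨0, hd⟩ from hk)]; ring
      · rw [Set.indicator_of_notMem hk, hjneg, hh k,
          if_neg (show ¬ (0:ℤ) ≤ k ⟨0, hd⟩ from hk)]; ring
    have hsum_eq : (∑' k, q (j - k) * (h k - h j)) =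
        ∑' k : {k : Fin d → ℤ | 0 ≤ c k}, q (j - (k : Fin d → ℤ)) := by
      calc (∑' k, q (j - k) * (h k - h j))
          = ∑' k, Set.indicator {k : Fin d → ℤ | 0 ≤ c k} (fun k => q (j - k)) k :=
            tsum_congr heq
        _ = ∑' k : {k : Fin d → ℤ | 0 ≤ c k}, q (j - (k : Fin d → ℤ)) :=
            (tsum_subtype _ _).symm
    have hnn : 0 ≤ ∑' k : {k : Fin d → ℤ | 0 ≤ c k}, q (j - (k : Fin d → ℤ)) :=
      tsum_nonneg fun k => hq0 _
    have hle : (∑' k : {k : Fin d → ℤ | 0 ≤ c k}, q (j - (k : Fin d → ℤ))) ≤ T i := by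
      refine Summable.tsum_le_tsum_of_inj (fun k => ⟨j - k.1, ?_⟩) ?_ (fun m _ => hq0 _)
        (fun k => le_rfl) ?_ (hTsummable i)
      · have : (0:ℤ) ≤ c k.1 := k.2
        have := hcsub j k.1
        simp only [hc] at *
        omega
      · intro a b hab
        simpa [Subtype.ext_iff, sub_right_inj] using hab
      · have := (hsub j).subtype {k : Fin d → ℤ | 0 ≤ c k}
        exact this
    rw [hψ j, hsum_eq, hjneg, zero_add, abs_of_nonneg hnn]
    exact hle
  have hUle : ∀ i : ℤ, 1 ≤ i → U i ≤ T i := by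
    intro i hi
    haveI := hne i
    exact ciSup_le fun j => hψtail i hi j.1 j.2
  -- part 2
  have part2 : Tendsto U atTop (nhds 0) := by
    refine tendsto_of_tendsto_of_tendsto_of_le_of_le' tendsto_const_nhds hTtend
      (Filter.Eventually.of_forall hU0) ?_
    filter_upwards [Filter.eventually_ge_atTop (1 : ℤ)] with i hi
    exact hUle i hi
  -- summability of k ↦ q (j-k) ψ k
  have hsumψ : ∀ j, Summable fun k => q (j - k) * ψ k := by
    intro j
    refine Summable.of_nonneg_of_le (fun k => mul_nonneg (hq0 _) (hψ0 _)) (fun k => ?_)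
      ((hsub j).mul_left C)
    calc q (j - k) * ψ k ≤ q (j - k) * C := by
          exact mul_le_mul_of_nonneg_left (hψC k) (hq0 _)
      _ = C * q (j - k) := mul_comm _ _
  have hsumLψ : ∀ j, Summable fun k => q (j - k) * (ψ k - ψ j) := by
    intro j
    have h1 : (fun k => q (j - k) * (ψ k - ψ j)) =
        fun k => q (j - k) * ψ k - q (j - k) * ψ j := by
      funext k; ring
    rw [h1]
    exact (hsumψ j).sub ((hsub j).mul_right (ψ j))
  have hsumLψabs : ∀ j, Summable fun k => |q (j - k) * (ψ k - ψ j)| := fun j =>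
    (hsumLψ j).abs
  -- key estimate
  have hkey : ∀ i : ℤ, ∀ j : Fin d → ℤ, c j ≤ -i →
      |∑' k, q (j - k) * (ψ k - ψ j)| ≤ Q * U (i / 2) + C * T (i - i / 2) + Q * U i := by
    intro i j hj
    set r : ℤ := i / 2 with hr
    set s : Set (Fin d → ℤ) := {k | c k ≤ -r} with hs
    -- the main sum bound
    have hstep1 : |∑' k, q (j - k) * (ψ k - ψ j)| ≤
        (∑' k, q (j - k) * ψ k) + ψ j * Q := by
      calc |∑' k, q (j - k) * (ψ k - ψ j)| ≤ ∑' k, |q (j - k) * (ψ k - ψ j)| :=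
            habs_tsum _ (hsumLψabs j)
        _ ≤ ∑' k, (q (j - k) * ψ k + q (j - k) * ψ j) := by
            refine Summable.tsum_le_tsum (fun k => ?_) (hsumLψabs j)
              ((hsumψ j).add ((hsub j).mul_right (ψ j)))
            rw [abs_mul, abs_of_nonneg (hq0 _)]
            have : |ψ k - ψ j| ≤ ψ k + ψ j := by
              rw [abs_sub_le_iff]; constructor <;> nlinarith [hψ0 j, hψ0 k]
            nlinarith [hq0 (j - k)]
        _ = (∑' k, q (j - k) * ψ k) + ∑' k, q (j - k) * ψ j :=
            Summable.tsum_add (hsumψ j) ((hsub j).mul_right (ψ j))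
        _ = (∑' k, q (j - k) * ψ k) + ψ j * Q := by
            rw [tsum_mul_right, hsub_tsum j, mul_comm]
    -- split main sum
    have hsum_s : Summable ((fun k => q (j - k) * ψ k) ∘ (Subtype.val : s → _)) :=
      (hsumψ j).subtype s
    have hsum_sc : Summable ((fun k => q (j - k) * ψ k) ∘ (Subtype.val : ↥sᶜ → _)) :=
      (hsumψ j).subtype sᶜ
    have hsplit : (∑' k : s, q (j - k.1) * ψ k.1) + (∑' k : ↥sᶜ, q (j - k.1) * ψ k.1) =
        ∑' k, q (j - k) * ψ k := Summable.tsum_add_tsum_compl hsum_s hsum_sc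
    have hbound_s : (∑' k : s, q (j - k.1) * ψ k.1) ≤ Q * U r := by
      calc (∑' k : s, q (j - k.1) * ψ k.1) ≤ ∑' k : s, q (j - k.1) * U r := by
            refine Summable.tsum_le_tsum (fun k => ?_) hsum_s (((hsub j).subtype s).mul_right (U r))
            refine mul_le_mul_of_nonneg_left ?_ (hq0 _)
            haveI := hne r
            exact le_ciSup (hUbdd r) ⟨k.1, k.2⟩
        _ = (∑' k : s, q (j - k.1)) * U r := tsum_mul_right
        _ ≤ Q * U r := by
            refine mul_le_mul_of_nonneg_right ?_ (hU0 r)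
            calc (∑' k : s, q (j - k.1)) ≤ ∑' k, q (j - k) := by
                  refine Summable.tsum_le_tsum_of_inj Subtype.val Subtype.val_injective
                    (fun m _ => hq0 _) (fun k => le_rfl) ((hsub j).subtype s) (hsub j)
              _ = Q := hsub_tsum j
    have hbound_sc : (∑' k : ↥sᶜ, q (j - k.1) * ψ k.1) ≤ C * T (i - r) := by
      calc (∑' k : ↥sᶜ, q (j - k.1) * ψ k.1) ≤ ∑' k : ↥sᶜ, C * q (j - k.1) := by
            refine Summable.tsum_le_tsum (fun k => ?_) hsum_sc (((hsub j).subtype sᶜ).mul_left C)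
            calc q (j - k.1) * ψ k.1 ≤ q (j - k.1) * C :=
                  mul_le_mul_of_nonneg_left (hψC _) (hq0 _)
              _ = C * q (j - k.1) := mul_comm _ _
        _ = C * ∑' k : ↥sᶜ, q (j - k.1) := tsum_mul_left
        _ ≤ C * T (i - r) := by
            refine mul_le_mul_of_nonneg_left ?_ hC0
            refine Summable.tsum_le_tsum_of_inj (fun k => ⟨j - k.1, ?_⟩) ?_ (fun m _ => hq0 _)
              (fun k => le_rfl) ((hsub j).subtype sᶜ) (hTsummable (i - r))
            · have hk : ¬ (c k.1 ≤ -r) := k.2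
              have := hcsub j k.1
              simp only [hc] at *
              omega
            · intro a b hab
              simpa [Subtype.ext_iff, sub_right_inj] using hab
    have hψjU : ψ j ≤ U i := by
      haveI := hne i
      exact le_ciSup (hUbdd i) ⟨j, hj⟩
    calc |∑' k, q (j - k) * (ψ k - ψ j)| ≤ (∑' k, q (j - k) * ψ k) + ψ j * Q := hstep1
      _ = (∑' k : s, q (j - k.1) * ψ k.1) + (∑' k : ↥sᶜ, q (j - k.1) * ψ k.1) + ψ j * Q := by
          rw [hsplit]
      _ ≤ Q * U r + C * T (i - r) + U i * Q :=
          add_le_add (add_le_add hbound_s hbound_sc)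
            (mul_le_mul_of_nonneg_right hψjU hQ0)
      _ = Q * U r + C * T (i - r) + Q * U i := by ring
  -- the sup in part 3
  have hVbdd : ∀ i : ℤ, BddAbove (Set.range fun j : {j : Fin d → ℤ // j ⟨0, hd⟩ ≤ -i} =>
      |∑' k, q ((j : Fin d → ℤ) - k) * (ψ k - ψ (j : Fin d → ℤ))|) := by
    intro i
    refine ⟨Q * U (i / 2) + C * T (i - i / 2) + Q * U i, ?_⟩
    rintro x ⟨j, rfl⟩
    exact hkey i j.1 j.2
  have hVle : ∀ i : ℤ,
      (⨆ j : {j : Fin d → ℤ // j ⟨0, hd⟩ ≤ -i},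
        |∑' k, q ((j : Fin d → ℤ) - k) * (ψ k - ψ (j : Fin d → ℤ))|) ≤
      Q * U (i / 2) + C * T (i - i / 2) + Q * U i := by
    intro i
    haveI := hne i
    exact ciSup_le fun j => hkey i j.1 j.2
  have hV0 : ∀ i : ℤ, 0 ≤ ⨆ j : {j : Fin d → ℤ // j ⟨0, hd⟩ ≤ -i},
      |∑' k, q ((j : Fin d → ℤ) - k) * (ψ k - ψ (j : Fin d → ℤ))| := by
    intro i
    haveI := hne i
    exact le_trans (abs_nonneg _) (le_ciSup (hVbdd i) (Classical.arbitrary _))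
  have hhalf : Tendsto (fun i : ℤ => i / 2) atTop atTop := by
    rw [tendsto_atTop]
    intro b
    filter_upwards [Filter.eventually_ge_atTop (2 * b)] with i hi
    rw [Int.le_ediv_iff_mul_le (by norm_num : (0:ℤ) < 2)]
    omega
  have hhalf2 : Tendsto (fun i : ℤ => i - i / 2) atTop atTop := by
    refine tendsto_atTop_mono (fun i => ?_) hhalf
    have := Int.mul_ediv_add_emod i 2
    have h1 := Int.emod_nonneg i (by norm_num : (2:ℤ) ≠ 0)
    omega
  have hG : Tendsto (fun i : ℤ => Q * U (i / 2) + C * T (i - i / 2) + Q * U i) atTop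
      (nhds 0) := by
    have t1 : Tendsto (fun i : ℤ => Q * U (i / 2)) atTop (nhds 0) := by
      simpa using (part2.comp hhalf).const_mul Q
    have t2 : Tendsto (fun i : ℤ => C * T (i - i / 2)) atTop (nhds 0) := by
      simpa using (hTtend.comp hhalf2).const_mul C
    have t3 : Tendsto (fun i : ℤ => Q * U i) atTop (nhds 0) := by
      simpa using part2.const_mul Q
    simpa using (t1.add t2).add t3
  refine ⟨part1, part2, ?_⟩
  exact tendsto_of_tendsto_of_tendsto_of_le_of_le' tendsto_const_nhds hG
    (Filter.Eventually.of_forall hV0) (Filter.Eventually.of_forall hVle)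
end

section
/- Let (Ω, 𝓕, μ) be a probability space and T : Ω → [0,∞) a random variable. Suppose there are constants s > 0, ν ≥ 1, C ≥ 1 and c > 0 such that μ(T > ν·(m² + 1)·s) ≤ C·e^{−c·m} for every integer m ≥ 0. Then μ(T > m·s) ≤ C·e^{2c}·e^{−(c/√ν)·√m} for every integer m ≥ 1. -/
open MeasureTheory

/-- Let `T ≥ 0` be a random variable on a probability space and suppose there are
constants `s > 0`, `ν ≥ 1`, `C ≥ 1`, `c > 0` such that
`μ(T > ν (m² + 1) s) ≤ C e^{-c m}` for every integer `m ≥ 0`.  Then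
`μ(T > m s) ≤ C e^{2c} e^{-(c/√ν) √m}` for every integer `m ≥ 1`. -/
theorem stmt12 {Ω : Type*} [MeasurableSpace Ω] (μ : Measure Ω)
    [IsProbabilityMeasure μ] (T : Ω → ℝ) (hT : ∀ ω, 0 ≤ T ω)
    (s ν C c : ℝ) (hs : 0 < s) (hν : 1 ≤ ν) (hC : 1 ≤ C) (hc : 0 < c)
    (h : ∀ m : ℕ, μ {ω | ν * ((m : ℝ) ^ 2 + 1) * s < T ω}
      ≤ ENNReal.ofReal (C * Real.exp (-c * m))) :
    ∀ m : ℕ, 1 ≤ m → μ {ω | (m : ℝ) * s < T ω}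
      ≤ ENNReal.ofReal (C * Real.exp (2 * c) *
          Real.exp (-(c / Real.sqrt ν) * Real.sqrt m)) := by
  intro m hm
  have hν0 : (0:ℝ) < ν := lt_of_lt_of_le one_pos hν
  have hsν : (0:ℝ) < Real.sqrt ν := Real.sqrt_pos.mpr hν0
  have hsν1 : (1:ℝ) ≤ Real.sqrt ν := Real.one_le_sqrt.mpr hν
  have hm0 : (0:ℝ) ≤ (m:ℝ) := Nat.cast_nonneg m
  have hsqdiv : Real.sqrt ((m:ℝ)/ν) = Real.sqrt m / Real.sqrt ν :=
    Real.sqrt_div hm0 ν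
  by_cases hcase : (m:ℝ) < ν
  · -- trivial bound
    have h1 : μ {ω | (m : ℝ) * s < T ω} ≤ 1 := prob_le_one
    refine h1.trans ?_
    rw [← ENNReal.ofReal_one]
    apply ENNReal.ofReal_le_ofReal
    have hsm : Real.sqrt m ≤ Real.sqrt ν := Real.sqrt_le_sqrt hcase.le
    have hexp : (1:ℝ) ≤ Real.exp (2 * c) * Real.exp (-(c / Real.sqrt ν) * Real.sqrt m) := by
      rw [← Real.exp_add]
      apply Real.one_le_exp
      have : (c / Real.sqrt ν) * Real.sqrt m ≤ c * 1 := by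
        rw [div_mul_eq_mul_div, div_le_iff₀ hsν]
        have : Real.sqrt m ≤ 2 * Real.sqrt ν := hsm.trans (by nlinarith)
        nlinarith
      nlinarith
    nlinarith [Real.exp_pos (2*c), Real.exp_pos (-(c / Real.sqrt ν) * Real.sqrt m)]
  · push_neg at hcase
    obtain ⟨x, hx⟩ : ∃ x : ℝ, x = (m:ℝ)/ν - 1 := ⟨_, rfl⟩
    have hx0 : 0 ≤ x := by
      have : (1:ℝ) ≤ (m:ℝ)/ν := (one_le_div hν0).mpr hcase
      linarith
    obtain ⟨k, hk⟩ : ∃ k : ℕ, k = ⌊Real.sqrt x⌋₊ := ⟨_, rfl⟩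
    have hkle : (k:ℝ) ≤ Real.sqrt x := hk ▸ Nat.floor_le (Real.sqrt_nonneg x)
    have hk2 : (k:ℝ)^2 ≤ x := by
      nlinarith [Real.sq_sqrt hx0, Real.sqrt_nonneg x]
    have hbound : ν * ((k:ℝ)^2 + 1) * s ≤ (m:ℝ) * s := by
      have : ν * ((k:ℝ)^2 + 1) ≤ (m:ℝ) := by
        have : (k:ℝ)^2 + 1 ≤ (m:ℝ)/ν := by linarith
        calc ν * ((k:ℝ)^2 + 1) ≤ ν * ((m:ℝ)/ν) := by nlinarith
          _ = (m:ℝ) := by field_simp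
      nlinarith
    have hsub : {ω | (m : ℝ) * s < T ω} ⊆ {ω | ν * ((k:ℝ)^2 + 1) * s < T ω} := by
      intro ω hω
      exact lt_of_le_of_lt hbound hω
    refine (measure_mono hsub).trans ((h k).trans ?_)
    apply ENNReal.ofReal_le_ofReal
    have hklt : Real.sqrt x < (k:ℝ) + 1 := by
      rw [hk]; exact_mod_cast Nat.lt_succ_floor _
    -- √(m/ν) ≤ √x + 1
    have hsq1 : Real.sqrt ((m:ℝ)/ν) ≤ Real.sqrt x + 1 := by
      have h1 : (m:ℝ)/ν ≤ (Real.sqrt x + 1)^2 := by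
        nlinarith [Real.sq_sqrt hx0, Real.sqrt_nonneg x]
      calc Real.sqrt ((m:ℝ)/ν) ≤ Real.sqrt ((Real.sqrt x + 1)^2) := Real.sqrt_le_sqrt h1
        _ = Real.sqrt x + 1 := Real.sqrt_sq (by positivity)
    have hkey : (c / Real.sqrt ν) * Real.sqrt m ≤ c * ((k:ℝ) + 2) := by
      have h2 : Real.sqrt m / Real.sqrt ν ≤ (k:ℝ) + 2 := by
        rw [← hsqdiv]; linarith
      calc (c / Real.sqrt ν) * Real.sqrt m = c * (Real.sqrt m / Real.sqrt ν) := by ring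
        _ ≤ c * ((k:ℝ) + 2) := by nlinarith
    have hexp : Real.exp (-c * k) ≤ Real.exp (2*c) * Real.exp (-(c / Real.sqrt ν) * Real.sqrt m) := by
      rw [← Real.exp_add]
      apply Real.exp_le_exp.mpr
      nlinarith
    calc C * Real.exp (-c * k)
        ≤ C * (Real.exp (2*c) * Real.exp (-(c / Real.sqrt ν) * Real.sqrt m)) := by
          apply mul_le_mul_of_nonneg_left hexp (by linarith)
      _ = C * Real.exp (2*c) * Real.exp (-(c / Real.sqrt ν) * Real.sqrt m) := by ring
end
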